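/- arXiv:1506.06469 — 4 statements merged into one kernel-verified Lean document; each statement's English description precedes it below -/
import Mathlib

section
/- Let n ≥ 2 and let α ∈ ℝⁿ be non-resonant (k·α ≠ 0 for every nonzero k ∈ ℤⁿ) with at least one component equal to 1. Set Ψ_α(Q) = max{ |k·α|⁻¹ : k ∈ ℤⁿ, 0 < |k|_∞ ≤ Q } for Q ≥ 1, and C_n = n²·n!. Then for every real δ with 0 < δ ≤ n²/(n+2) and every point θ ∈ ℝⁿ, there exists a real number t with 0 ≤ t ≤ C_n·Ψ_α(2·C_n/δ) and an integer vector k ∈ ℤⁿ such that |t·α − θ − k|_∞ ≤ δ. -/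
/-!
Let `p` be the gauge of the tube `{x | ∃ s, |s| ≤ T ∧ ‖x - s • α‖ ≤ δ}`: a point at `p`-distance
`< 1` from `ℤⁿ` is `δ`-close, modulo `ℤⁿ`, to some `s • α` with `|s| ≤ T`.

Transference: if every nonzero functional integral on a lattice `G` has `p`-dual norm `≥ Λ`, then
every point of `span ℝ G` is within `p`-distance `c_d / Λ` of `G`, `d` being the rank. By
induction on `d`: take a primitive integral `φ` of nearly minimal dual norm `λ`, `u ∈ G` with
`φ u = 1`, and `v` with `p v ≤ 1`, `φ v ≥ 8λ/9`. An integer multiple of `u` and a multiple of `v`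
of `p`-size `≤ 9 / (16 λ)` move `θ` into `ker φ`, and `G ∩ ker φ` has dual minimum `≥ 7λ/16`: a
functional on it extends by Hahn–Banach and, corrected by a multiple of `φ`, becomes integral
on `G`.

For `G = ℤⁿ` an integer vector `k ≠ 0` has dual norm `≥ T |k · α| + δ ‖k‖∞`; with `Q = 2 C_n / δ`
and `T = C_n Ψ(Q) / 2` this is `≥ C_n / 2 > c_n`, according as `‖k‖∞ ≤ Q` or not.
-/

open Module Submodule

/-- In the induction step of `exists_sub_le_coveringConstant_div`, `9/16` is the cost of the step
along `v` and `16/7` the loss in the dual minimum on passing to `G ∩ ker φ`. -/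
noncomputable def coveringConstant : ℕ → ℝ
  | 0 => 0
  | d + 1 => 9 / 16 + 16 / 7 * coveringConstant d

lemma coveringConstant_nonneg (d : ℕ) : 0 ≤ coveringConstant d := by
  induction d with
  | zero => exact le_rfl
  | succ d ih => rw [coveringConstant]; positivity

lemma coveringConstant_lt {n : ℕ} (hn : 2 ≤ n) :
    coveringConstant n < (n : ℝ) ^ 2 * n.factorial / 2 := by
  induction n, hn using Nat.le_induction with
  | base => norm_num [coveringConstant, Nat.factorial]
  | succ d hd ih =>
    have hd' : (2 : ℝ) ≤ d := by exact_mod_cast hd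
    have hfac : (1 : ℝ) ≤ d.factorial := by exact_mod_cast d.factorial_pos
    have hX : 2 ≤ (d : ℝ) ^ 2 * d.factorial / 2 := by nlinarith
    have hgrowth : 3 * ((d : ℝ) ^ 2 * d.factorial / 2) ≤
        ((d : ℝ) + 1) ^ 2 * (((d : ℝ) + 1) * d.factorial) / 2 := by nlinarith
    rw [coveringConstant, Nat.factorial_succ]
    push_cast
    linarith

section Integral

variable {E : Type*} [AddCommGroup E] [Module ℝ E]

def IsIntegralOn (G : Submodule ℤ E) (φ : E →ₗ[ℝ] ℝ) : Prop :=
  ∀ g ∈ G, ∃ z : ℤ, φ g = z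

/-- For a subgroup of a finite-dimensional space this says that `G` is discrete in its span. -/
def IsDualSeparating (G : Submodule ℤ E) : Prop :=
  ∀ x ∈ span ℝ (G : Set E), x ≠ 0 → ∃ φ, IsIntegralOn G φ ∧ φ x ≠ 0

def kerSublattice (G : Submodule ℤ E) (φ : E →ₗ[ℝ] ℝ) : Submodule ℤ E :=
  G ⊓ (LinearMap.ker φ).restrictScalars ℤ

variable {G : Submodule ℤ E} {φ : E →ₗ[ℝ] ℝ} {u : E}

lemma mem_kerSublattice {x : E} : x ∈ kerSublattice G φ ↔ x ∈ G ∧ φ x = 0 :=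
  Iff.rfl

lemma kerSublattice_le : kerSublattice G φ ≤ G :=
  inf_le_left

lemma IsIntegralOn.mono {H : Submodule ℤ E} (hφ : IsIntegralOn G φ) (hHG : H ≤ G) :
    IsIntegralOn H φ :=
  fun g hg => hφ g (hHG hg)

lemma IsIntegralOn.exists_primitive (hφ : IsIntegralOn G φ) (hne : ∃ g ∈ G, φ g ≠ 0) :
    ∃ a : ℤ, a ≠ 0 ∧ IsIntegralOn G ((a : ℝ)⁻¹ • φ) ∧ ∃ u ∈ G, φ u = a := by
  let J : AddSubgroup ℤ := (G.toAddSubgroup.map φ.toAddMonoidHom).comap (Int.castAddHom ℝ)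
  obtain ⟨a, hJa⟩ := Int.subgroup_cyclic J
  have hJ : ∀ z : ℤ, (∃ g ∈ G, φ g = z) ↔ a ∣ z := fun z => by
    rw [← Int.mem_zmultiples_iff, AddSubgroup.zmultiples_eq_closure, ← hJa]
    simp [J]
  obtain ⟨u, hu, hφu⟩ := (hJ a).2 dvd_rfl
  have ha : a ≠ 0 := by
    rintro rfl
    obtain ⟨g, hg, hφg⟩ := hne
    obtain ⟨z, hz⟩ := hφ g hg
    obtain rfl := zero_dvd_iff.1 ((hJ z).1 ⟨g, hg, hz⟩)
    exact hφg (by simpa using hz)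
  refine ⟨a, ha, fun g hg => ?_, u, hu, hφu⟩
  obtain ⟨z, hz⟩ := hφ g hg
  obtain ⟨m, rfl⟩ := (hJ z).1 ⟨g, hg, hz⟩
  have : (a : ℝ) ≠ 0 := by exact_mod_cast ha
  exact ⟨m, by simp [hz]; field_simp⟩

lemma sub_intCast_smul_mem_kerSublattice (hu : u ∈ G) (hφu : φ u = 1) {g : E} (hg : g ∈ G)
    {z : ℤ} (hz : φ g = z) : g - (z : ℝ) • u ∈ kerSublattice G φ := by
  refine mem_kerSublattice.2 ⟨?_, by simp [hz, hφu]⟩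
  rw [Int.cast_smul_eq_zsmul]
  exact G.sub_mem hg (G.smul_mem z hu)

lemma span_kerSublattice (hφ : IsIntegralOn G φ) (hu : u ∈ G) (hφu : φ u = 1) :
    span ℝ (kerSublattice G φ : Set E) = span ℝ (G : Set E) ⊓ LinearMap.ker φ := by
  apply le_antisymm
  · rw [span_le]
    rintro x ⟨hxG, hxK⟩
    exact ⟨subset_span hxG, hxK⟩
  · rintro x ⟨hxG, hxK⟩
    let π : E →ₗ[ℝ] E := LinearMap.id - φ.smulRight u
    have hπG : π '' G ⊆ kerSublattice G φ := by
      rintro _ ⟨g, hg, rfl⟩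
      obtain ⟨z, hz⟩ := hφ g hg
      simpa [π, hz] using sub_intCast_smul_mem_kerSublattice hu hφu hg hz
    have hπx : π x = x := by simp [π, LinearMap.mem_ker.1 hxK]
    rw [← hπx]
    exact span_mono hπG (map_span π (G : Set E) ▸ mem_map_of_mem hxG)

lemma finrank_inf_ker_add_one (V : Submodule ℝ E) [FiniteDimensional ℝ V] {x : E} (hx : x ∈ V)
    (hφx : φ x ≠ 0) : finrank ℝ (V ⊓ LinearMap.ker φ : Submodule ℝ E) + 1 = finrank ℝ V := by
  have hφV : φ.domRestrict V ≠ 0 := fun h => hφx (LinearMap.congr_fun h ⟨x, hx⟩)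
  have hcomap : comap V.subtype (V ⊓ LinearMap.ker φ) = comap V.subtype (LinearMap.ker φ) := by
    ext y
    simp
  rw [← Dual.finrank_ker_add_one_of_ne_zero hφV, LinearMap.ker_domRestrict, ← hcomap,
    (comapSubtypeEquivOfLe (inf_le_left : V ⊓ LinearMap.ker φ ≤ V)).finrank_eq]

lemma finrank_span_kerSublattice_add_one [FiniteDimensional ℝ E] (hφ : IsIntegralOn G φ)
    (hu : u ∈ G) (hφu : φ u = 1) :
    finrank ℝ (span ℝ (kerSublattice G φ : Set E)) + 1 = finrank ℝ (span ℝ (G : Set E)) := by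
  rw [span_kerSublattice hφ hu hφu]
  exact finrank_inf_ker_add_one _ (subset_span hu) (hφu ▸ one_ne_zero)

lemma IsDualSeparating.kerSublattice (hG : IsDualSeparating G) (hφ : IsIntegralOn G φ)
    (hu : u ∈ G) (hφu : φ u = 1) : IsDualSeparating (kerSublattice G φ) := by
  intro x hx hx0
  rw [span_kerSublattice hφ hu hφu] at hx
  obtain ⟨ψ, hψ, hψx⟩ := hG x hx.1 hx0
  exact ⟨ψ, hψ.mono kerSublattice_le, hψx⟩

lemma IsIntegralOn.sub_smul (hφ : IsIntegralOn G φ) (hu : u ∈ G) (hφu : φ u = 1)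
    {ξ : E →ₗ[ℝ] ℝ} (hξ : IsIntegralOn (kerSublattice G φ) ξ) (r : ℤ) :
    IsIntegralOn G (ξ - (ξ u - r) • φ) := by
  intro g hg
  obtain ⟨z, hz⟩ := hφ g hg
  obtain ⟨z', hz'⟩ := hξ _ (sub_intCast_smul_mem_kerSublattice hu hφu hg hz)
  refine ⟨z' + r * z, ?_⟩
  simp only [map_sub, map_smul, smul_eq_mul] at hz'
  simp only [LinearMap.sub_apply, LinearMap.smul_apply, smul_eq_mul, hz]
  push_cast
  linarith

lemma exists_sub_sub_mem_span_kerSublattice (hφ : IsIntegralOn G φ) (hu : u ∈ G)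
    (hφu : φ u = 1) {v : E} (hv : v ∈ span ℝ (G : Set E)) (hφv : 0 < φ v) {θ : E}
    (hθ : θ ∈ span ℝ (G : Set E)) :
    ∃ k : ℤ, ∃ r : ℝ, |r| * φ v ≤ 1 / 2 ∧
      θ - k • u - r • v ∈ span ℝ (kerSublattice G φ : Set E) := by
  refine ⟨round (φ θ), (φ θ - round (φ θ)) / φ v, ?_, ?_⟩
  · rw [abs_div, abs_of_pos hφv, div_mul_cancel₀ _ hφv.ne']
    exact abs_sub_round _
  · rw [span_kerSublattice hφ hu hφu]
    refine mem_inf.2 ⟨sub_mem (sub_mem hθ (zsmul_mem (subset_span hu) _)) (smul_mem _ _ hv), ?_⟩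
    rw [LinearMap.mem_ker]
    simp only [map_sub, map_zsmul, map_smul, smul_eq_mul, hφu, zsmul_eq_mul, mul_one]
    field_simp
    ring

end Integral

section DualBounds

variable {E : Type*} [AddCommGroup E] [Module ℝ E] {p : Seminorm ℝ E} {G : Submodule ℤ E}
  {φ : E →ₗ[ℝ] ℝ} {u : E} {C : ℝ}

/-- `sInf (dualBounds p G)` is the first minimum of the dual lattice of `G` for the norm dual
to `p` on `span ℝ G`. -/
def dualBounds (p : Seminorm ℝ E) (G : Submodule ℤ E) : Set ℝ :=
  {C | ∃ φ : E →ₗ[ℝ] ℝ, IsIntegralOn G φ ∧ (∃ g ∈ G, φ g ≠ 0) ∧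
    ∀ x ∈ span ℝ (G : Set E), |φ x| ≤ C * p x}

lemma pos_of_mem_dualBounds (hC : C ∈ dualBounds p G) : 0 < C := by
  obtain ⟨φ, -, ⟨g, hg, hφg⟩, hφC⟩ := hC
  have := hφC g (subset_span hg)
  nlinarith [abs_pos.2 hφg, apply_nonneg p g]

lemma exists_primitive_of_mem_dualBounds (hC : C ∈ dualBounds p G) :
    ∃ φ : E →ₗ[ℝ] ℝ, IsIntegralOn G φ ∧ (∃ u ∈ G, φ u = 1) ∧
      ∀ x ∈ span ℝ (G : Set E), |φ x| ≤ C * p x := by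
  obtain ⟨φ, hφ, hne, hφC⟩ := hC
  obtain ⟨a, ha, hφa, u, hu, hφu⟩ := hφ.exists_primitive hne
  have ha' : (1 : ℝ) ≤ |(a : ℝ)| := by exact_mod_cast Int.one_le_abs ha
  refine ⟨(a : ℝ)⁻¹ • φ, hφa, ⟨u, hu, by simp [hφu, ha]⟩, fun x hx => ?_⟩
  calc |((a : ℝ)⁻¹ • φ) x| = |φ x| / |(a : ℝ)| := by simp [abs_mul, div_eq_inv_mul]
    _ ≤ |φ x| := div_le_self (abs_nonneg _) ha'
    _ ≤ C * p x := hφC x hx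

lemma exists_le_one_lt_apply (hp : ∀ x, x ≠ 0 → 0 < p x) {V : Submodule ℝ E} {b : ℝ}
    (h : ∃ x ∈ V, b * p x < |φ x|) : ∃ v ∈ V, p v ≤ 1 ∧ b < φ v := by
  obtain ⟨x, hxV, hx⟩ := h
  have hpx : 0 < p x := hp x (by rintro rfl; simp at hx)
  obtain ⟨y, hyV, hpy, hφy⟩ : ∃ y ∈ V, p y = p x ∧ φ y = |φ x| := by
    rcases abs_choice (φ x) with h | h
    · exact ⟨x, hxV, rfl, h.symm⟩
    · exact ⟨-x, V.neg_mem hxV, map_neg_eq_map p x, by simp [h]⟩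
  refine ⟨(p y)⁻¹ • y, V.smul_mem _ hyV, ?_, ?_⟩
  · rw [map_smul_eq_mul, norm_inv, Real.norm_eq_abs, hpy, abs_of_pos hpx, inv_mul_cancel₀ hpx.ne']
  · rw [map_smul, smul_eq_mul, hφy, hpy, lt_inv_mul_iff₀ hpx, mul_comm]
    exact hx

lemma exists_extension_abs_le (V : Submodule ℝ E) (ψ : E →ₗ[ℝ] ℝ) (hC : 0 ≤ C)
    (hψ : ∀ x ∈ V, |ψ x| ≤ C * p x) :
    ∃ ξ : E →ₗ[ℝ] ℝ, (∀ x ∈ V, ξ x = ψ x) ∧ ∀ x, |ξ x| ≤ C * p x := by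
  have hCp : ∀ x, (C.toNNReal • p) x = C * p x := fun x => by
    simp [NNReal.smul_def, Real.coe_toNNReal _ hC]
  obtain ⟨ξ, hξψ, hξ⟩ := Dual.exists_extension_of_le_seminorm_real V (ψ.domRestrict V)
    (p := C.toNNReal • p) fun x => (hCp x).symm ▸ (le_abs_self _).trans (hψ x x.2)
  exact ⟨ξ, fun x hx => hξψ ⟨x, hx⟩, fun x => hCp x ▸ hξ x⟩

lemma le_add_of_mem_dualBounds_kerSublattice {Λ C' : ℝ} (hΛ : Λ ∈ lowerBounds (dualBounds p G))
    (hφ : IsIntegralOn G φ) (hu : u ∈ G) (hφu : φ u = 1)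
    (hφC : ∀ x ∈ span ℝ (G : Set E), |φ x| ≤ C * p x)
    (hC' : C' ∈ dualBounds p (kerSublattice G φ)) : Λ ≤ C' + C / 2 := by
  have hC'0 := (pos_of_mem_dualBounds hC').le
  obtain ⟨ψ, hψ, ⟨g₀, hg₀, hψg₀⟩, hψC'⟩ := hC'
  obtain ⟨ξ, hξψ, hξC'⟩ := exists_extension_abs_le _ ψ hC'0 hψC'
  have hξ : IsIntegralOn (kerSublattice G φ) ξ := fun g hg =>
    hξψ g (subset_span hg) ▸ hψ g hg
  refine hΛ ⟨ξ - (ξ u - round (ξ u)) • φ, hφ.sub_smul hu hφu hξ _, ⟨g₀, hg₀.1, ?_⟩, ?_⟩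
  · have hφg₀ : φ g₀ = 0 := hg₀.2
    simpa [hφg₀, hξψ g₀ (subset_span hg₀)] using hψg₀
  · intro x hx
    calc |ξ x - (ξ u - round (ξ u)) * φ x| ≤ |ξ x| + |ξ u - round (ξ u)| * |φ x| := by
          rw [← abs_mul]; exact abs_sub _ _
      _ ≤ C' * p x + 1 / 2 * (C * p x) := by
          gcongr
          exacts [hξC' x, abs_sub_round _, hφC x hx]
      _ = (C' + C / 2) * p x := by ring

end DualBounds

section Covering

variable {E : Type*} [NormedAddCommGroup E] [NormedSpace ℝ E] [FiniteDimensional ℝ E]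
  {p : Seminorm ℝ E} {c : ℝ}

lemma dualBounds_nonempty (hc : 0 < c) (hp : ∀ x, c * ‖x‖ ≤ p x) {G : Submodule ℤ E}
    (hG : IsDualSeparating G) (hG0 : span ℝ (G : Set E) ≠ ⊥) : (dualBounds p G).Nonempty := by
  obtain ⟨x, hx, hx0⟩ := exists_mem_ne_zero_of_ne_bot hG0
  obtain ⟨φ, hφ, hφx⟩ := hG x hx hx0
  have hne : ∃ g ∈ G, φ g ≠ 0 := by
    by_contra! h
    exact hφx (span_le (p := LinearMap.ker φ).2 h hx)
  let f := LinearMap.toContinuousLinearMap φ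
  refine ⟨‖f‖ / c, φ, hφ, hne, fun y _ => ?_⟩
  calc |φ y| = ‖f y‖ := rfl
    _ ≤ ‖f‖ * ‖y‖ := f.le_opNorm y
    _ ≤ ‖f‖ * (p y / c) := by gcongr; rw [le_div_iff₀ hc, mul_comm]; exact hp y
    _ = ‖f‖ / c * p y := by ring

theorem exists_sub_le_coveringConstant_div (hc : 0 < c) (hp : ∀ x, c * ‖x‖ ≤ p x)
    (G : Submodule ℤ E) (hG : IsDualSeparating G) {Λ : ℝ} (hΛ : 0 < Λ)
    (hdual : Λ ∈ lowerBounds (dualBounds p G)) {θ : E} (hθ : θ ∈ span ℝ (G : Set E)) :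
    ∃ w ∈ G, p (θ - w) ≤ coveringConstant (finrank ℝ (span ℝ (G : Set E))) / Λ := by
  obtain ⟨d, hd⟩ : ∃ d, finrank ℝ (span ℝ (G : Set E)) = d := ⟨_, rfl⟩
  rw [hd]
  induction d generalizing G Λ θ with
  | zero =>
    rw [finrank_eq_zero.1 hd, mem_bot] at hθ
    exact ⟨0, G.zero_mem, by simp [hθ, coveringConstant]⟩
  | succ d ih =>
    have hSne := dualBounds_nonempty hc hp hG fun h => by rw [← finrank_eq_zero] at h; omega
    set lam := sInf (dualBounds p G)
    have hlam : ∀ C ∈ dualBounds p G, lam ≤ C := fun _ hC => csInf_le ⟨Λ, hdual⟩ hC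
    have hΛlam : Λ ≤ lam := le_csInf hSne hdual
    obtain ⟨C, hCS, hClam⟩ := exists_lt_of_csInf_lt hSne (show lam < 9 / 8 * lam by linarith)
    obtain ⟨φ, hφ, ⟨u, hu, hφu⟩, hφC⟩ := exists_primitive_of_mem_dualBounds hCS
    obtain ⟨v, hv, hpv, hφv⟩ : ∃ v ∈ span ℝ (G : Set E), p v ≤ 1 ∧ 8 / 9 * lam < φ v := by
      refine exists_le_one_lt_apply
        (fun x hx => (mul_pos hc (norm_pos_iff.2 hx)).trans_le (hp x)) ?_
      by_contra! h
      linarith [hlam _ ⟨φ, hφ, ⟨u, hu, by simp [hφu]⟩, h⟩]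
    obtain ⟨k, r, hr, hθ₀⟩ :=
      exists_sub_sub_mem_span_kerSublattice hφ hu hφu hv (by linarith) hθ
    obtain ⟨w₀, hw₀, hpw₀⟩ := ih _ (hG.kerSublattice hφ hu hφu)
      (show 0 < 7 / 16 * lam by linarith)
      (fun C' hC' => by
        linarith [le_add_of_mem_dualBounds_kerSublattice hlam hφ hu hφu hφC hC'])
      hθ₀ (by have := finrank_span_kerSublattice_add_one hφ hu hφu; omega)
    have hpr : |r| * p v ≤ 9 / 16 / lam := by
      have hr' : |r| * (8 / 9 * lam) ≤ 1 / 2 :=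
        (mul_le_mul_of_nonneg_left hφv.le (abs_nonneg r)).trans hr
      calc |r| * p v ≤ |r| := mul_le_of_le_one_right (abs_nonneg r) hpv
        _ ≤ 9 / 16 / lam := by rw [le_div_iff₀ (by linarith)]; linarith
    refine ⟨k • u + w₀, G.add_mem (G.smul_mem k hu) (kerSublattice_le hw₀), ?_⟩
    calc p (θ - (k • u + w₀)) = p (r • v + (θ - k • u - r • v - w₀)) := by abel_nf
      _ ≤ |r| * p v + p (θ - k • u - r • v - w₀) := by
          rw [← Real.norm_eq_abs, ← map_smul_eq_mul]; exact map_add_le_add p _ _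
      _ ≤ 9 / 16 / lam + coveringConstant d / (7 / 16 * lam) := add_le_add hpr hpw₀
      _ = coveringConstant (d + 1) / lam := by rw [coveringConstant]; field_simp
      _ ≤ coveringConstant (d + 1) / Λ := by
          gcongr
          exact coveringConstant_nonneg _

end Covering

section Tube

variable {E : Type*} [NormedAddCommGroup E] [NormedSpace ℝ E] (α : E) {T δ : ℝ}

def segmentTube (α : E) (T δ : ℝ) : Set E :=
  {x | ∃ s : ℝ, |s| ≤ T ∧ ‖x - s • α‖ ≤ δ}

lemma convex_segmentTube : Convex ℝ (segmentTube α T δ) := by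
  rintro x ⟨s, hs, hx⟩ y ⟨t, ht, hy⟩ a b ha hb hab
  refine ⟨a * s + b * t, ?_, ?_⟩
  · calc |a * s + b * t| ≤ a * |s| + b * |t| := by
          simpa [abs_mul, abs_of_nonneg ha, abs_of_nonneg hb] using abs_add_le (a * s) (b * t)
      _ ≤ a * T + b * T := by gcongr
      _ = T := by rw [← add_mul, hab, one_mul]
  · calc ‖a • x + b • y - (a * s + b * t) • α‖ = ‖a • (x - s • α) + b • (y - t • α)‖ := by
          congr 1; simp only [smul_sub, add_smul, mul_smul]; abel
      _ ≤ a * δ + b * δ := by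
          refine (norm_add_le _ _).trans ?_
          simp only [norm_smul, Real.norm_of_nonneg ha, Real.norm_of_nonneg hb]
          gcongr
      _ = δ := by rw [← add_mul, hab, one_mul]

lemma balanced_segmentTube : Balanced ℝ (segmentTube α T δ) := by
  rintro a ha _ ⟨x, ⟨s, hs, hx⟩, rfl⟩
  rw [Real.norm_eq_abs] at ha
  refine ⟨a * s, ?_, ?_⟩
  · rw [abs_mul]; nlinarith [abs_nonneg a, abs_nonneg s]
  · rw [mul_smul, ← smul_sub, norm_smul, Real.norm_eq_abs]
    nlinarith [abs_nonneg a, norm_nonneg (x - s • α)]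

lemma absorbent_segmentTube (hT : 0 ≤ T) (hδ : 0 < δ) : Absorbent ℝ (segmentTube α T δ) :=
  absorbent_nhds_zero <| Filter.mem_of_superset (Metric.closedBall_mem_nhds 0 hδ)
    fun x hx => ⟨0, by simpa using hT, by simpa using hx⟩

lemma inv_mul_norm_le_gauge_segmentTube (hT : 0 ≤ T) (hδ : 0 < δ) (x : E) :
    (δ + T * ‖α‖)⁻¹ * ‖x‖ ≤ gauge (segmentTube α T δ) x := by
  have hsub : segmentTube α T δ ⊆ Metric.closedBall 0 (δ + T * ‖α‖) := by
    rintro y ⟨s, hs, hy⟩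
    rw [mem_closedBall_zero_iff]
    calc ‖y‖ ≤ ‖y - s • α‖ + ‖s • α‖ := norm_le_norm_sub_add _ _
      _ ≤ δ + T * ‖α‖ := by rw [norm_smul, Real.norm_eq_abs]; gcongr
  rw [inv_mul_eq_div, ← gauge_closedBall (by positivity)]
  exact gauge_mono (absorbent_segmentTube α hT hδ) hsub x

lemma exists_of_gauge_segmentTube_lt_one (hT : 0 ≤ T) (hδ : 0 < δ) {x : E}
    (hx : gauge (segmentTube α T δ) x < 1) : ∃ s : ℝ, |s| ≤ T ∧ ‖x - s • α‖ ≤ δ :=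
  setOfPred_gauge_lt_one_subset_self (convex_segmentTube α)
    ⟨0, by simpa using hT, by simpa using hδ.le⟩ (absorbent_segmentTube α hT hδ) hx

end Tube

section IntLattice

variable {ι : Type*}

def intLattice (ι : Type*) : Submodule ℤ (ι → ℝ) :=
  LinearMap.range ((Int.castAddHom ℝ).toIntLinearMap.compLeft ι)

lemma mem_intLattice {x : ι → ℝ} : x ∈ intLattice ι ↔ ∃ k : ι → ℤ, (fun i => (k i : ℝ)) = x :=
  Iff.rfl

lemma indicator_mem_intLattice [DecidableEq ι] (i : ι) :
    (fun j => if i = j then (1 : ℝ) else 0) ∈ intLattice ι :=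
  mem_intLattice.2 ⟨fun j => if i = j then 1 else 0, by ext j; split_ifs <;> simp_all⟩

lemma isDualSeparating_intLattice : IsDualSeparating (intLattice ι) := by
  intro x _ hx
  obtain ⟨i, hi⟩ := Function.ne_iff.1 hx
  refine ⟨LinearMap.proj i, ?_, hi⟩
  rintro _ ⟨k, rfl⟩
  exact ⟨k i, rfl⟩

variable [Fintype ι]

lemma span_intLattice : span ℝ (intLattice ι : Set (ι → ℝ)) = ⊤ := by
  classical
  refine eq_top_iff.2 fun x _ => ?_
  rw [pi_eq_sum_univ x]
  exact sum_mem fun i _ => smul_mem _ _ (subset_span (indicator_mem_intLattice i))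

lemma IsIntegralOn.exists_eq_sum_intLattice {φ : (ι → ℝ) →ₗ[ℝ] ℝ}
    (hφ : IsIntegralOn (intLattice ι) φ) : ∃ k : ι → ℤ, ∀ x, φ x = ∑ i, (k i : ℝ) * x i := by
  classical
  choose k hk using fun i => hφ _ (indicator_mem_intLattice i)
  refine ⟨k, fun x => ?_⟩
  rw [φ.pi_apply_eq_sum_univ x]
  simp [hk, mul_comm]

lemma exists_mem_segmentTube_sum_mul_eq (α w : ι → ℝ) {T δ : ℝ} (hT : 0 ≤ T) (hδ : 0 ≤ δ) :
    ∃ x ∈ segmentTube α T δ,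
      ∑ i, w i * x i = T * |∑ i, w i * α i| + δ * ∑ i, |w i| := by
  have abs_sign_le_one : ∀ a : ℝ, |(SignType.sign a : ℝ)| ≤ 1 := fun a => by
    rcases lt_trichotomy a 0 with h | h | h <;> simp [h]
  set s := T * SignType.sign (∑ i, w i * α i)
  refine ⟨s • α + δ • fun i => (SignType.sign (w i) : ℝ), ⟨s, ?_, ?_⟩, ?_⟩
  · rw [abs_mul, abs_of_nonneg hT]
    exact mul_le_of_le_one_right hT (abs_sign_le_one _)
  · rw [add_sub_cancel_left, norm_smul, Real.norm_of_nonneg hδ]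
    refine mul_le_of_le_one_right hδ ((pi_norm_le_iff_of_nonneg zero_le_one).2 fun i => ?_)
    exact abs_sign_le_one _
  · calc ∑ i, w i * (s • α + δ • fun i => (SignType.sign (w i) : ℝ)) i
        = s * ∑ i, w i * α i + δ * ∑ i, w i * SignType.sign (w i) := by
          simp only [Pi.add_apply, Pi.smul_apply, smul_eq_mul, Finset.mul_sum,
            ← Finset.sum_add_distrib]
          exact Finset.sum_congr rfl fun i _ => by ring
      _ = T * |∑ i, w i * α i| + δ * ∑ i, |w i| := by
          simp only [s, self_mul_sign, mul_assoc, mul_comm (SignType.sign _ : ℝ)]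

lemma exists_le_of_mem_dualBounds_intLattice (α : ι → ℝ) {T δ C : ℝ} (hT : 0 ≤ T) (hδ : 0 ≤ δ)
    {p : Seminorm ℝ (ι → ℝ)} (hp : ∀ x ∈ segmentTube α T δ, p x ≤ 1)
    (hC : C ∈ dualBounds p (intLattice ι)) :
    ∃ k : ι → ℤ, k ≠ 0 ∧
      T * |∑ i, (k i : ℝ) * α i| + δ * ‖fun i => (k i : ℝ)‖ ≤ C := by
  have hC0 := (pos_of_mem_dualBounds hC).le
  obtain ⟨φ, hφ, ⟨g, hg, hφg⟩, hφC⟩ := hC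
  obtain ⟨k, hk⟩ := hφ.exists_eq_sum_intLattice
  refine ⟨k, fun h => hφg (by simp [hk, h]), ?_⟩
  obtain ⟨x, hx, hφx⟩ := exists_mem_segmentTube_sum_mul_eq α (fun i => (k i : ℝ)) hT hδ
  have hnorm : ‖fun i => (k i : ℝ)‖ ≤ ∑ i, |(k i : ℝ)| :=
    (pi_norm_le_iff_of_nonneg (by positivity)).2 fun i =>
      Finset.single_le_sum (f := fun i => |(k i : ℝ)|) (fun _ _ => abs_nonneg _) (Finset.mem_univ i)
  calc T * |∑ i, (k i : ℝ) * α i| + δ * ‖fun i => (k i : ℝ)‖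
      ≤ φ x := by rw [hk, hφx]; gcongr
    _ ≤ C * p x := (le_abs_self _).trans (hφC x (span_intLattice (ι := ι) ▸ mem_top))
    _ ≤ C := mul_le_of_le_one_right hC0 (hp x hx)

lemma min_le_of_mem_dualBounds_intLattice (α : ι → ℝ) {T δ Q M C : ℝ} (hT : 0 ≤ T) (hδ : 0 ≤ δ)
    {p : Seminorm ℝ (ι → ℝ)} (hp : ∀ x ∈ segmentTube α T δ, p x ≤ 1)
    (hM : ∀ k : ι → ℤ, k ≠ 0 → ‖fun i => (k i : ℝ)‖ ≤ Q → M ≤ |∑ i, (k i : ℝ) * α i|)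
    (hC : C ∈ dualBounds p (intLattice ι)) : min (T * M) (δ * Q) ≤ C := by
  obtain ⟨k, hk, hkC⟩ := exists_le_of_mem_dualBounds_intLattice α hT hδ hp hC
  have hTk := mul_nonneg hT (abs_nonneg (∑ i, (k i : ℝ) * α i))
  have hδk := mul_nonneg hδ (norm_nonneg fun i => (k i : ℝ))
  rcases le_or_gt ‖fun i => (k i : ℝ)‖ Q with hkQ | hkQ
  · have := mul_le_mul_of_nonneg_left (hM k hk hkQ) hT
    exact (min_le_left _ _).trans (by linarith)
  · have := mul_le_mul_of_nonneg_left hkQ.le hδ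
    exact (min_le_right _ _).trans (by linarith)

theorem exists_abs_le_norm_smul_sub_intCast_le (α : ι → ℝ) {T δ Q M : ℝ} (hT : 0 < T)
    (hδ : 0 < δ)
    (hM : ∀ k : ι → ℤ, k ≠ 0 → ‖fun i => (k i : ℝ)‖ ≤ Q → M ≤ |∑ i, (k i : ℝ) * α i|)
    (hcov : coveringConstant (Fintype.card ι) < min (T * M) (δ * Q)) (θ : ι → ℝ) :
    ∃ s : ℝ, |s| ≤ T ∧ ∃ k : ι → ℤ, ‖s • α - θ - fun i => (k i : ℝ)‖ ≤ δ := by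
  have hΛ : 0 < min (T * M) (δ * Q) := (coveringConstant_nonneg _).trans_lt hcov
  let p := gaugeSeminorm (balanced_segmentTube α) (convex_segmentTube α)
    (absorbent_segmentTube α hT.le hδ)
  obtain ⟨w, hw, hpw⟩ := exists_sub_le_coveringConstant_div (p := p)
    (inv_pos.2 (by positivity : 0 < δ + T * ‖α‖)) (inv_mul_norm_le_gauge_segmentTube α hT.le hδ)
    (intLattice ι) isDualSeparating_intLattice hΛ
    (fun C hC => min_le_of_mem_dualBounds_intLattice α hT.le hδ.le
      (fun x hx => gauge_le_one_of_mem hx) hM hC)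
    (θ := -θ) (by simp [span_intLattice])
  rw [span_intLattice, finrank_top, finrank_pi] at hpw
  obtain ⟨s, hs, hsδ⟩ := exists_of_gauge_segmentTube_lt_one α hT.le hδ
    (hpw.trans_lt ((div_lt_one hΛ).2 hcov))
  obtain ⟨k, rfl⟩ := mem_intLattice.1 hw
  refine ⟨-s, by rwa [abs_neg], k, ?_⟩
  rwa [show -s • α - θ - (fun i => (k i : ℝ)) = -θ - (fun i => (k i : ℝ)) - s • α by
    rw [neg_smul]; abel]

end IntLattice

section SmallDivisors

variable {ι : Type*} [Fintype ι]

lemma finite_setOf_norm_intCast_le (Q : ℝ) : {k : ι → ℤ | ‖fun i => (k i : ℝ)‖ ≤ Q}.Finite := by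
  refine (isCompact_closedBall (0 : ι → ℤ) Q).finite_of_discrete.subset fun k hk => ?_
  have hQ : 0 ≤ Q := (norm_nonneg _).trans hk
  rw [mem_closedBall_zero_iff, pi_norm_le_iff_of_nonneg hQ]
  intro i
  simpa [Int.norm_eq_abs] using (norm_le_pi_norm (fun i => (k i : ℝ)) i).trans hk

def inverseSmallDivisors (α : ι → ℝ) (Q : ℝ) : Set ℝ :=
  {r | ∃ k : ι → ℤ, k ≠ 0 ∧ ‖fun i => (k i : ℝ)‖ ≤ Q ∧ r = |∑ i, (k i : ℝ) * α i|⁻¹}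

lemma sSup_inverseSmallDivisors_pos_and_inv_le [Nonempty ι] {α : ι → ℝ}
    (hnr : ∀ k : ι → ℤ, k ≠ 0 → ∑ i, (k i : ℝ) * α i ≠ 0) {Q : ℝ} (hQ : 1 ≤ Q) :
    0 < sSup (inverseSmallDivisors α Q) ∧ ∀ k : ι → ℤ, k ≠ 0 → ‖fun i => (k i : ℝ)‖ ≤ Q →
      (sSup (inverseSmallDivisors α Q))⁻¹ ≤ |∑ i, (k i : ℝ) * α i| := by
  have hmem : ∀ k : ι → ℤ, k ≠ 0 → ‖fun i => (k i : ℝ)‖ ≤ Q →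
      |∑ i, (k i : ℝ) * α i|⁻¹ ∈ inverseSmallDivisors α Q := fun k hk hkQ => ⟨k, hk, hkQ, rfl⟩
  have hfin : (inverseSmallDivisors α Q).Finite :=
    ((finite_setOf_norm_intCast_le Q).image fun k => |∑ i, (k i : ℝ) * α i|⁻¹).subset
      (by rintro _ ⟨k, -, hk, rfl⟩; exact ⟨k, hk, rfl⟩)
  have hne : (inverseSmallDivisors α Q).Nonempty :=
    ⟨_, hmem (fun _ => 1) (fun h => one_ne_zero (congrFun h (Classical.arbitrary ι)))
      (by simpa using hQ)⟩
  obtain ⟨k₀, hk₀, -, hsSup⟩ := hne.csSup_mem hfin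
  refine ⟨hsSup ▸ inv_pos.2 (abs_pos.2 (hnr k₀ hk₀)), fun k hk hkQ => ?_⟩
  exact inv_le_of_inv_le₀ (abs_pos.2 (hnr k hk)) (le_csSup hfin.bddAbove (hmem k hk hkQ))

end SmallDivisors

theorem ergodization_time_bound_nonresonant_general {n : ℕ} (hn : 2 ≤ n)
    (α : Fin n → ℝ)
    (hnr : ∀ k : Fin n → ℤ, k ≠ 0 → (∑ i, (k i : ℝ) * α i) ≠ 0)
    (Ψ : ℝ → ℝ)
    (hΨ : ∀ Q : ℝ, Ψ Q = sSup {r : ℝ | ∃ k : Fin n → ℤ, k ≠ 0 ∧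
      ‖(fun i => (k i : ℝ))‖ ≤ Q ∧ r = |∑ i, (k i : ℝ) * α i|⁻¹})
    (Cn : ℝ) (hCn : Cn = (n : ℝ) ^ 2 * (Nat.factorial n : ℝ))
    (δ : ℝ) (hδ : 0 < δ) (hδ' : δ ≤ (n : ℝ) ^ 2 / (n + 2 : ℝ))
    (θ : Fin n → ℝ) :
    ∃ t : ℝ, 0 ≤ t ∧ t ≤ Cn * Ψ (2 * Cn / δ) ∧
      ∃ k : Fin n → ℤ, ‖t • α - θ - (fun i => (k i : ℝ))‖ ≤ δ := by
  have : Nonempty (Fin n) := ⟨⟨0, by omega⟩⟩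
  have hCn0 : 0 < Cn := by rw [hCn]; positivity
  set Q := 2 * Cn / δ with hQ_def
  have hQ : 1 ≤ Q := by
    have hn' : (2 : ℝ) ≤ n := by exact_mod_cast hn
    have hfac : (1 : ℝ) ≤ n.factorial := by exact_mod_cast n.factorial_pos
    rw [le_div_iff₀ hδ, one_mul, hCn]
    calc δ ≤ (n : ℝ) ^ 2 := hδ'.trans (div_le_self (by positivity) (by linarith))
      _ ≤ 2 * ((n : ℝ) ^ 2 * n.factorial) := by nlinarith
  obtain ⟨hΨ0, hΨle⟩ := hΨ _ ▸ sSup_inverseSmallDivisors_pos_and_inv_le hnr hQ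
  set T := Cn * Ψ Q / 2 with hT
  have hcov : coveringConstant (Fintype.card (Fin n)) < min (T * (Ψ Q)⁻¹) (δ * Q) := by
    rw [show T * (Ψ Q)⁻¹ = Cn / 2 by rw [hT]; field_simp, hQ_def, mul_div_cancel₀ _ hδ.ne',
      min_eq_left (by linarith), Fintype.card_fin, hCn]
    exact coveringConstant_lt hn
  obtain ⟨s, hs, k, hk⟩ :=
    exists_abs_le_norm_smul_sub_intCast_le α (by positivity) hδ hΨle hcov (θ - T • α)
  refine ⟨T + s, by linarith [(abs_le.1 hs).1], by linarith [(abs_le.1 hs).2], k, ?_⟩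
  rwa [add_smul, add_comm, add_sub_assoc, ← neg_sub θ, ← sub_eq_add_neg]

/-- **Ergodization time, non-resonant case.** For a non-resonant `α ∈ ℝⁿ` with a component
equal to `1`, and `0 < δ ≤ n²/(n+2)`, every `θ ∈ ℝⁿ` is `δ`-approximated modulo `ℤⁿ`
(in sup-norm) by `t·α` with `0 ≤ t ≤ C_n·Ψ_α(2C_n/δ)`, where `C_n = n²·n!`. -/
theorem ergodization_time_bound_nonresonant {n : ℕ} (hn : 2 ≤ n)
    (α : Fin n → ℝ)
    (hnr : ∀ k : Fin n → ℤ, k ≠ 0 → (∑ i, (k i : ℝ) * α i) ≠ 0)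
    (hα1 : ∃ i, α i = 1)
    (Ψ : ℝ → ℝ)
    (hΨ : ∀ Q : ℝ, Ψ Q = sSup {r : ℝ | ∃ k : Fin n → ℤ, k ≠ 0 ∧
      ‖(fun i => (k i : ℝ))‖ ≤ Q ∧ r = |∑ i, (k i : ℝ) * α i|⁻¹})
    (Cn : ℝ) (hCn : Cn = (n : ℝ) ^ 2 * (Nat.factorial n : ℝ))
    (δ : ℝ) (hδ : 0 < δ) (hδ' : δ ≤ (n : ℝ) ^ 2 / (n + 2 : ℝ))
    (θ : Fin n → ℝ) :
    ∃ t : ℝ, 0 ≤ t ∧ t ≤ Cn * Ψ (2 * Cn / δ) ∧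
      ∃ k : Fin n → ℤ, ‖t • α - θ - (fun i => (k i : ℝ))‖ ≤ δ :=
  ergodization_time_bound_nonresonant_general hn α hnr Ψ hΨ Cn hCn δ hδ hδ' θ
end

section
/- Let n ≥ 2, let α ∈ ℝⁿ \ {0}, let F_α be the smallest rational subspace of ℝⁿ containing α, d = dim F_α, Λ_α = F_α ∩ ℤⁿ. Let Q > 0 and suppose ω₁, …, ω_d ∈ ℚⁿ and positive integers q₁, …, q_d satisfy: q_j·ω_j ∈ ℤⁿ and |α − ω_j|_∞ ≤ d/(q_j·Q) for each j, and the vectors q₁ω₁, …, q_dω_d form a ℤ-basis of Λ_α. Then for every point θ ∈ F_α there exist t₁, …, t_d ∈ [0,1) such that, setting T = t₁q₁ + ⋯ + t_dq_d, one has 0 ≤ T ≤ q₁ + ⋯ + q_d and there exists k ∈ Λ_α with |T·α − θ − k|_∞ ≤ d²/Q. -/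
/-!
Because `F` is rational, it is spanned over `ℝ` by its lattice, hence by the basis
`b_j = q_j ω_j`, so `θ = ∑ c_j b_j` with real `c_j`. Take `t_j = fract c_j` and
`k = -∑ ⌊c_j⌋ b_j ∈ Λ`. Then `T α - θ - k = ∑ t_j q_j (α - ω_j)`, and each of the `d` terms has
norm at most `q_j ‖α - ω_j‖ ≤ d / Q`.
-/

open scoped BigOperators

/-- A subspace of `ℝⁿ` is rational if it is spanned by vectors with rational components. -/
def IsRationalSubspace {n : ℕ} (F : Submodule ℝ (Fin n → ℝ)) : Prop :=
  ∃ s : Set (Fin n → ℚ), F = Submodule.span ℝ ((fun v : Fin n → ℚ => fun i => (v i : ℝ)) '' s)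

/-- `F` is the smallest rational subspace of `ℝⁿ` containing `α`. -/
def IsSmallestRationalSubspace {n : ℕ} (α : Fin n → ℝ) (F : Submodule ℝ (Fin n → ℝ)) : Prop :=
  IsRationalSubspace F ∧ α ∈ F ∧
    ∀ F' : Submodule ℝ (Fin n → ℝ), IsRationalSubspace F' → α ∈ F' → F ≤ F'

/-- The lattice `F ∩ ℤⁿ`: points of `F` with integer coordinates. -/
def latticeOf {n : ℕ} (F : Submodule ℝ (Fin n → ℝ)) : Set (Fin n → ℝ) :=
  {x | x ∈ F ∧ ∀ i, ∃ m : ℤ, x i = (m : ℝ)}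

/-- Standard dot product on `ℝⁿ`. -/
def dot {n : ℕ} (x y : Fin n → ℝ) : ℝ := ∑ i, x i * y i

/-- `b` is a `ℤ`-basis of the lattice `Λ`. -/
def IsZBasisOf {n d : ℕ} (Λ : Set (Fin n → ℝ)) (b : Fin d → (Fin n → ℝ)) : Prop :=
  (∀ j, b j ∈ Λ) ∧ ∀ x ∈ Λ, ∃! c : Fin d → ℤ, x = ∑ j, (c j : ℝ) • b j

theorem exists_pos_nat_mul_eq_int {ι : Type*} [Fintype ι] (w : ι → ℚ) :
    ∃ N : ℕ, 0 < N ∧ ∀ i, ∃ m : ℤ, (N : ℚ) * w i = m := by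
  refine ⟨∏ i, (w i).den, Finset.prod_pos fun i _ => (w i).pos, fun i => ?_⟩
  obtain ⟨e, he⟩ : (w i).den ∣ ∏ i, (w i).den := Finset.dvd_prod_of_mem _ (Finset.mem_univ i)
  refine ⟨(w i).num * e, ?_⟩
  rw [he]
  push_cast
  rw [← Rat.den_mul_eq_num]
  ring

section Lattice

variable {n : ℕ} {F : Submodule ℝ (Fin n → ℝ)}

theorem natCast_smul_mem_latticeOf_of_rat {w : Fin n → ℚ} (hw : (fun i => (w i : ℝ)) ∈ F) :
    ∃ N : ℕ, 0 < N ∧ (N : ℝ) • (fun i => (w i : ℝ)) ∈ latticeOf F := by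
  obtain ⟨N, hN, hint⟩ := exists_pos_nat_mul_eq_int w
  refine ⟨N, hN, F.smul_mem _ hw, fun i => ?_⟩
  obtain ⟨m, hm⟩ := hint i
  exact ⟨m, by simpa using congrArg ((↑) : ℚ → ℝ) hm⟩

theorem latticeOf_subset_span {d : ℕ} {b : Fin d → Fin n → ℝ}
    (hb : IsZBasisOf (latticeOf F) b) : latticeOf F ⊆ Submodule.span ℝ (Set.range b) := by
  intro x hx
  obtain ⟨c, rfl, -⟩ := hb.2 x hx
  exact Submodule.sum_mem _ fun j _ => Submodule.smul_mem _ _ (Submodule.subset_span ⟨j, rfl⟩)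

theorem IsRationalSubspace.le_span_of_isZBasisOf (hF : IsRationalSubspace F) {d : ℕ}
    {b : Fin d → Fin n → ℝ} (hb : IsZBasisOf (latticeOf F) b) :
    F ≤ Submodule.span ℝ (Set.range b) := by
  obtain ⟨s, hs⟩ := hF
  conv_lhs => rw [hs]
  refine Submodule.span_le.2 ?_
  rintro _ ⟨w, hw, rfl⟩
  have hwF : (fun i => (w i : ℝ)) ∈ F := hs ▸ Submodule.subset_span ⟨w, hw, rfl⟩
  obtain ⟨N, hN, hNw⟩ := natCast_smul_mem_latticeOf_of_rat hwF
  exact (Submodule.smul_mem_iff _ (Nat.cast_ne_zero.2 hN.ne')).1 (latticeOf_subset_span hb hNw)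

def latticeAddSubgroup (F : Submodule ℝ (Fin n → ℝ)) : AddSubgroup (Fin n → ℝ) where
  carrier := latticeOf F
  zero_mem' := ⟨F.zero_mem, fun _ => ⟨0, by simp⟩⟩
  add_mem' := by
    rintro x y ⟨hxF, hx⟩ ⟨hyF, hy⟩
    refine ⟨F.add_mem hxF hyF, fun i => ?_⟩
    obtain ⟨a, ha⟩ := hx i
    obtain ⟨b, hb⟩ := hy i
    exact ⟨a + b, by simp [ha, hb]⟩
  neg_mem' := by
    rintro x ⟨hxF, hx⟩
    refine ⟨F.neg_mem hxF, fun i => ?_⟩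
    obtain ⟨a, ha⟩ := hx i
    exact ⟨-a, by simp [ha]⟩

theorem intCombination_mem_latticeOf {ι : Type*} [Fintype ι] {b : ι → Fin n → ℝ}
    (hb : ∀ j, b j ∈ latticeOf F) (m : ι → ℤ) : ∑ j, (m j : ℝ) • b j ∈ latticeOf F := by
  simp_rw [Int.cast_smul_eq_zsmul]
  exact (latticeAddSubgroup F).sum_mem fun j _ => (latticeAddSubgroup F).zsmul_mem (hb j) _

end Lattice

theorem fract_smul_sub_sum_sub_floor_eq {ι E : Type*} [Fintype ι] [AddCommGroup E] [Module ℝ E]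
    (c q : ι → ℝ) (α : E) (ω : ι → E) :
    (∑ j, Int.fract (c j) * q j) • α - ∑ j, c j • q j • ω j - ∑ j, ((-⌊c j⌋ : ℤ) : ℝ) • q j • ω j
      = ∑ j, Int.fract (c j) • q j • (α - ω j) := by
  rw [Finset.sum_smul, ← Finset.sum_sub_distrib, ← Finset.sum_sub_distrib]
  refine Finset.sum_congr rfl fun j _ => ?_
  rw [Int.fract]
  push_cast
  module

theorem norm_sum_smul_le_card_mul {ι E : Type*} [Fintype ι] [SeminormedAddCommGroup E]
    [NormedSpace ℝ E] {a : ι → ℝ} {x : ι → E} {C : ℝ} (ha : ∀ j, a j ∈ Set.Icc 0 1)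
    (hx : ∀ j, ‖x j‖ ≤ C) : ‖∑ j, a j • x j‖ ≤ Fintype.card ι * C := by
  calc ‖∑ j, a j • x j‖ ≤ ∑ _j : ι, C := by
        refine norm_sum_le_of_le _ fun j _ => ?_
        rw [norm_smul]
        refine (mul_le_of_le_one_left (norm_nonneg _) ?_).trans (hx j)
        rw [Real.norm_of_nonneg (ha j).1]
        exact (ha j).2
    _ = Fintype.card ι * C := by simp

theorem approximation_from_basis_general {n : ℕ}
    (α : Fin n → ℝ)
    (F : Submodule ℝ (Fin n → ℝ)) (hF : IsSmallestRationalSubspace α F)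
    (d : ℕ)
    (Q : ℝ)
    (ω : Fin d → (Fin n → ℝ)) (q : Fin d → ℕ)
    (hq : ∀ j, 1 ≤ q j)
    (happrox : ∀ j, ‖α - ω j‖ ≤ (d : ℝ) / ((q j : ℝ) * Q))
    (hbasis : IsZBasisOf (latticeOf F) (fun j => (q j : ℝ) • ω j))
    (θ : Fin n → ℝ) (hθ : θ ∈ F) :
    ∃ t : Fin d → ℝ, (∀ j, 0 ≤ t j ∧ t j < 1) ∧
      0 ≤ ∑ j, t j * (q j : ℝ) ∧
      ∑ j, t j * (q j : ℝ) ≤ ∑ j, (q j : ℝ) ∧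
      ∃ k ∈ latticeOf F, ‖(∑ j, t j * (q j : ℝ)) • α - θ - k‖ ≤ (d : ℝ) ^ 2 / Q := by
  obtain ⟨c, rfl⟩ :=
    (Submodule.mem_span_range_iff_exists_fun ℝ).1 (hF.1.le_span_of_isZBasisOf hbasis hθ)
  have hfract : ∀ j, Int.fract (c j) ∈ Set.Icc (0 : ℝ) 1 :=
    fun j => ⟨Int.fract_nonneg _, (Int.fract_lt_one _).le⟩
  have hterm : ∀ j, ‖(q j : ℝ) • (α - ω j)‖ ≤ d / Q := fun j => by
    have hqj : (0 : ℝ) < q j := by exact_mod_cast hq j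
    calc ‖(q j : ℝ) • (α - ω j)‖ = q j * ‖α - ω j‖ := by rw [norm_smul, Real.norm_natCast]
      _ ≤ q j * (d / (q j * Q)) := by gcongr; exact happrox j
      _ = d / Q := by field_simp
  refine ⟨fun j => Int.fract (c j), fun j => ⟨Int.fract_nonneg _, Int.fract_lt_one _⟩,
    Finset.sum_nonneg fun j _ => mul_nonneg (hfract j).1 (Nat.cast_nonneg _),
    Finset.sum_le_sum fun j _ => mul_le_of_le_one_left (Nat.cast_nonneg _) (hfract j).2,
    ∑ j, ((-⌊c j⌋ : ℤ) : ℝ) • (q j : ℝ) • ω j, intCombination_mem_latticeOf hbasis.1 _, ?_⟩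
  rw [fract_smul_sub_sum_sub_floor_eq]
  calc _ ≤ Fintype.card (Fin d) * (d / Q) := norm_sum_smul_le_card_mul hfract hterm
    _ = d ^ 2 / Q := by rw [Fintype.card_fin]; ring

/-- **Proof of Theorem 1 from the Proposition.** If `ω₁, …, ω_d` are rational approximations
of `α` with denominators `q₁, …, q_d` such that `|α − ω_j|_∞ ≤ d/(q_j Q)` and
`q₁ω₁, …, q_dω_d` is a `ℤ`-basis of `Λ_α`, then every `θ ∈ F_α` is `(d²/Q)`-approximated
modulo `Λ_α` by `T·α` where `T = t₁q₁ + ⋯ + t_dq_d` for some `t_j ∈ [0,1)`,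
so that `0 ≤ T ≤ q₁ + ⋯ + q_d`. -/
theorem approximation_from_basis {n : ℕ} (hn : 2 ≤ n)
    (α : Fin n → ℝ) (hα : α ≠ 0)
    (F : Submodule ℝ (Fin n → ℝ)) (hF : IsSmallestRationalSubspace α F)
    (d : ℕ) (hd : d = Module.finrank ℝ F)
    (Q : ℝ) (hQ : 0 < Q)
    (ω : Fin d → (Fin n → ℝ)) (q : Fin d → ℕ)
    (hq : ∀ j, 1 ≤ q j)
    (hωrat : ∀ j i, ∃ r : ℚ, ω j i = (r : ℝ))
    (hint : ∀ j i, ∃ m : ℤ, (q j : ℝ) * ω j i = (m : ℝ))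
    (happrox : ∀ j, ‖α - ω j‖ ≤ (d : ℝ) / ((q j : ℝ) * Q))
    (hbasis : IsZBasisOf (latticeOf F) (fun j => (q j : ℝ) • ω j))
    (θ : Fin n → ℝ) (hθ : θ ∈ F) :
    ∃ t : Fin d → ℝ, (∀ j, 0 ≤ t j ∧ t j < 1) ∧
      0 ≤ ∑ j, t j * (q j : ℝ) ∧
      ∑ j, t j * (q j : ℝ) ≤ ∑ j, (q j : ℝ) ∧
      ∃ k ∈ latticeOf F, ‖(∑ j, t j * (q j : ℝ)) • α - θ - k‖ ≤ (d : ℝ) ^ 2 / Q :=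
  approximation_from_basis_general α F hF d Q ω q hq happrox hbasis θ hθ
end

section
/- Let α ∈ ℝ be irrational with |α| ≤ 1, and for Q ≥ 1 define Ψ_α(Q) = max{ |k₁ + k₂·α|⁻¹ : (k₁,k₂) ∈ ℤ², 0 < max(|k₁|,|k₂|) ≤ Q }. Then for every real δ with 0 < δ < 1, the δ-ergodization time of the rotation R_α satisfies N_α(δ) ≤ ⌊Ψ_α(2/δ)⌋ − 1; that is, for every x, y ∈ ℝ there exist an integer k with 0 ≤ k ≤ ⌊Ψ_α(2/δ)⌋ − 1 and an integer m such that |x + k·α − y − m| ≤ δ. -/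
/-!
Write `‖x‖` for the distance from `x` to the nearest integer and let `β = ‖qα‖` be the minimum of
`‖jα‖` over `1 ≤ j ≤ 2/δ`. The maximum defining `Ψ_α(2/δ)` is `β⁻¹`, attained at
`(k₁, k₂) = (-round (qα), q)`, which is admissible because `|α| ≤ 1`; Dirichlet's theorem gives
`β < δ/2`. Let `q'` be the first time with `‖q'α‖ < β`. As `‖jα‖ ≥ β` for `0 < j < q'`, Dirichlet's
theorem also gives `q' ≤ β⁻¹`. Hence for `0 ≤ k < ⌊β⁻¹⌋` either `k + q` or `k - (q' - q)` stays in
range, and since `‖q'α‖ < ‖qα‖` both moves rotate `kα` in the same direction by less than `δ`. So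
the orbit point lying closest to a given `t` from one side is within `δ` of `t`.
-/

noncomputable def distToInt (x : ℝ) : ℝ := |x - round x|

lemma distToInt_le (x : ℝ) (m : ℤ) : distToInt x ≤ |x - m| := round_le x m

lemma distToInt_neg (x : ℝ) : distToInt (-x) = distToInt x := by
  refine le_antisymm ((distToInt_le _ (-round x)).trans_eq ?_)
    ((distToInt_le _ (-round (-x))).trans_eq ?_)
  all_goals rw [← abs_neg, distToInt]; push_cast; ring_nf

lemma distToInt_natAbs_mul (k : ℤ) (α : ℝ) : distToInt (k.natAbs * α) = distToInt (k * α) := by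
  rw [Nat.cast_natAbs, Int.cast_abs]
  rcases abs_choice (k : ℝ) with h | h <;> rw [h]
  rw [neg_mul, distToInt_neg]

lemma distToInt_natCast_mul_pos {α : ℝ} (hα : Irrational α) {j : ℕ} (hj : j ≠ 0) :
    0 < distToInt (j * α) :=
  abs_pos.2 <| sub_ne_zero.2 <| (hα.natCast_mul hj).ne_int _

lemma natCast_le_inv_of_forall_le_distToInt {α β : ℝ} (hβ : 0 < β) {n : ℕ} (hn : 1 < n)
    (h : ∀ j : ℕ, 0 < j → j < n → β ≤ distToInt (j * α)) : (n : ℝ) ≤ β⁻¹ := by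
  obtain ⟨k, hk, hkn, hdist⟩ := Real.exists_nat_abs_mul_sub_round_le α (n := n - 1) (by omega)
  rw [← Nat.cast_add_one, Nat.sub_add_cancel hn.le, one_div] at hdist
  exact le_inv_comm₀ hβ (by positivity) |>.1 ((h k hk (by omega)).trans hdist)

lemma lt_inv_of_forall_le_distToInt {α β Q : ℝ} (hβ : 0 < β) (hQ : 1 ≤ Q)
    (h : ∀ j : ℕ, 0 < j → (j : ℝ) ≤ Q → β ≤ distToInt (j * α)) : β < Q⁻¹ := by
  have hn := natCast_le_inv_of_forall_le_distToInt (α := α) hβ (n := ⌊Q⌋₊ + 1)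
    (by have : 1 ≤ ⌊Q⌋₊ := Nat.le_floor (by exact_mod_cast hQ); omega)
    fun j hj hjn => h j hj ((Nat.le_floor_iff (by linarith)).1 (by omega))
  rw [Nat.cast_add_one] at hn
  exact lt_inv_comm₀ (by linarith) hβ |>.1 ((Nat.lt_floor_add_one Q).trans_le hn)

lemma exists_forall_le_distToInt (α : ℝ) {Q : ℝ} (hQ : 1 ≤ Q) :
    ∃ q : ℕ, 0 < q ∧ (q : ℝ) ≤ Q ∧
      ∀ j : ℕ, 0 < j → (j : ℝ) ≤ Q → distToInt (q * α) ≤ distToInt (j * α) := by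
  have hle {j : ℕ} : (j : ℝ) ≤ Q ↔ j ≤ ⌊Q⌋₊ := (Nat.le_floor_iff (by linarith)).symm
  obtain ⟨q, hq, hmin⟩ := (Finset.Icc 1 ⌊Q⌋₊).exists_min_image (fun j : ℕ => distToInt (j * α))
    ⟨1, Finset.mem_Icc.2 ⟨le_rfl, hle.1 (by exact_mod_cast hQ)⟩⟩
  rw [Finset.mem_Icc] at hq
  exact ⟨q, hq.1, hle.2 hq.2, fun j hj hjQ => hmin j (Finset.mem_Icc.2 ⟨hj, hle.1 hjQ⟩)⟩

lemma exists_first_distToInt_lt (α : ℝ) {β : ℝ} (hβ : 0 < β) :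
    ∃ q : ℕ, 0 < q ∧ distToInt (q * α) < β ∧ ∀ j : ℕ, 0 < j → j < q → β ≤ distToInt (j * α) := by
  classical
  have hex : ∃ q : ℕ, 0 < q ∧ distToInt (q * α) < β := by
    by_contra! h
    obtain ⟨n, hn⟩ := exists_nat_gt (max β⁻¹ 1)
    refine not_le.2 ((le_max_left _ _).trans_lt hn) ?_
    exact natCast_le_inv_of_forall_le_distToInt hβ
      (by exact_mod_cast (le_max_right _ _).trans_lt hn) fun j hj _ => h j hj
  exact ⟨Nat.find hex, (Nat.find_spec hex).1, (Nat.find_spec hex).2,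
    fun j hj hjq => not_lt.1 fun hlt => Nat.find_min hex hjq ⟨hj, hlt⟩⟩

lemma abs_round_natCast_mul_le {α : ℝ} (hα : |α| ≤ 1) (q : ℕ) : |round (q * α)| ≤ q := by
  have hqα : |(q : ℝ) * α| ≤ q := by
    rw [abs_mul, Nat.abs_cast]
    exact mul_le_of_le_one_right q.cast_nonneg hα
  have hround : |(round (q * α) : ℝ)| < q + 1 := by
    have := abs_sub_abs_le_abs_sub (round (q * α) : ℝ) (q * α)
    rw [abs_sub_comm] at this
    linarith [abs_sub_round ((q : ℝ) * α)]
  exact Int.lt_add_one_iff.1 (by exact_mod_cast hround)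

lemma isGreatest_inv_abs_add_mul {α Q : ℝ} (hα : Irrational α) (hα1 : |α| ≤ 1) {q : ℕ}
    (hq : 0 < q) (hqQ : (q : ℝ) ≤ Q)
    (hmin : ∀ j : ℕ, 0 < j → (j : ℝ) ≤ Q → distToInt (q * α) ≤ distToInt (j * α)) :
    IsGreatest {r : ℝ | ∃ k₁ k₂ : ℤ, ¬(k₁ = 0 ∧ k₂ = 0) ∧
      ((max |k₁| |k₂| : ℤ) : ℝ) ≤ Q ∧ r = |(k₁ : ℝ) + (k₂ : ℝ) * α|⁻¹} (distToInt (q * α))⁻¹ := by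
  have hβ := distToInt_natCast_mul_pos hα hq.ne'
  refine ⟨⟨-round (q * α), q, by simp [hq.ne'], ?_, ?_⟩, ?_⟩
  · refine le_trans ?_ hqQ
    exact_mod_cast max_le ((abs_neg _).trans_le (abs_round_natCast_mul_le hα1 q)) (by simp)
  · rw [distToInt]; push_cast; ring_nf
  · rintro r ⟨k₁, k₂, hk, hmax, rfl⟩
    refine inv_anti₀ hβ ?_
    by_cases hk₂ : k₂ = 0
    · have hk₁ : (1 : ℝ) ≤ |(k₁ : ℝ)| := by exact_mod_cast Int.one_le_abs (by tauto)
      have := abs_sub_round ((q : ℝ) * α)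
      simp only [hk₂, Int.cast_zero, zero_mul, add_zero]
      exact (this.trans (by norm_num)).trans hk₁
    · have hk₂Q : (k₂.natAbs : ℝ) ≤ Q := by
        refine le_trans ?_ hmax
        rw [Nat.cast_natAbs]
        exact_mod_cast le_max_right _ _
      calc distToInt (q * α) ≤ distToInt (k₂.natAbs * α) := hmin _ (by omega) hk₂Q
        _ = distToInt (k₂ * α) := distToInt_natAbs_mul k₂ α
        _ ≤ |(k₁ : ℝ) + k₂ * α| := by
          simpa [add_comm] using distToInt_le ((k₂ : ℝ) * α) (-k₁)

lemma exists_abs_mul_sub_sub_le_of_forall_step {θ δ : ℝ} {M : ℕ} (hM : 0 < M)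
    (hstep : ∀ k < M, ∃ k' < M, ∃ s : ℝ, 0 < s ∧ s ≤ δ ∧ ∃ c : ℤ, (k' : ℝ) * θ = k * θ + s + c)
    (t : ℝ) : ∃ k < M, ∃ m : ℤ, |k * θ - t - m| ≤ δ := by
  -- `fract (t - k θ)` is how far `k θ` lies below `t` on the circle; take `k` minimising it
  obtain ⟨k, hk, hmin⟩ := (Finset.range M).exists_min_image
    (fun k : ℕ => Int.fract (t - k * θ)) ⟨0, Finset.mem_range.2 hM⟩
  rw [Finset.mem_range] at hk
  refine ⟨k, hk, -⌊t - k * θ⌋, ?_⟩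
  rw [← abs_neg, Int.cast_neg, show -(k * θ - t - -(⌊t - k * θ⌋ : ℝ)) = t - k * θ - ⌊t - k * θ⌋ by
    ring, Int.self_sub_floor, abs_of_nonneg (Int.fract_nonneg _)]
  by_contra! hfar
  obtain ⟨k', hk', s, hs, hsδ, c, hk'θ⟩ := hstep k hk
  have hcloser : Int.fract (t - k' * θ) = Int.fract (t - k * θ) - s := by
    refine Int.fract_eq_iff.2 ⟨by linarith, by linarith [Int.fract_lt_one (t - k * θ)],
      ⌊t - k * θ⌋ - c, ?_⟩
    rw [hk'θ, ← Int.self_sub_floor]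
    push_cast
    ring
  linarith [hmin k' (Finset.mem_range.2 hk')]

lemma exists_abs_mul_sub_sub_le_of_abs_sub_lt {θ δ : ℝ} {a b M : ℕ} (A B : ℤ) (hab : a < b)
    (hbM : b ≤ M) (hlt : |b * θ - B| < |a * θ - A|) (hδ : |a * θ - A| + |b * θ - B| ≤ δ)
    (t : ℝ) : ∃ k < M, ∃ m : ℤ, |k * θ - t - m| ≤ δ := by
  wlog hpos : 0 < a * θ - A generalizing θ A B t
  · have hneg : ∀ (n : ℕ) (N : ℤ), |(n : ℝ) * -θ - ((-N : ℤ) : ℝ)| = |n * θ - N| := fun n N => by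
      rw [← abs_neg]; push_cast; ring_nf
    have hA : 0 < a * -θ - ((-A : ℤ) : ℝ) := by
      push_cast
      linarith [abs_of_nonpos (not_lt.1 hpos), abs_nonneg ((b : ℝ) * θ - B)]
    obtain ⟨k, hk, m, hm⟩ := this (-A) (-B) (by rwa [hneg, hneg]) (by rwa [hneg, hneg]) (-t) hA
    exact ⟨k, hk, -m, by rw [← abs_neg]; convert hm using 2; push_cast; ring⟩
  have hbθ := abs_lt.1 (hlt.trans_eq (abs_of_pos hpos))
  have hδ' := hδ.trans_eq' (by rw [abs_of_pos hpos])
  refine exists_abs_mul_sub_sub_le_of_forall_step (by omega) (fun k hk => ?_) t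
  by_cases hka : k + a < M
  · refine ⟨k + a, hka, a * θ - A, hpos, ?_, A, by push_cast; ring⟩
    linarith [abs_nonneg ((b : ℝ) * θ - B)]
  · -- `k ≥ M - a ≥ b - a`, so stepping back by `b - a` stays in range
    refine ⟨k - (b - a), by omega, (a * θ - A) - (b * θ - B), by linarith, ?_, A - B, ?_⟩
    · linarith [neg_abs_le ((b : ℝ) * θ - B)]
    rw [Nat.cast_sub (by omega), Nat.cast_sub hab.le]
    push_cast
    ring

/-- **Ergodization time for circle rotations.** For irrational `α` with `|α| ≤ 1` and
`0 < δ < 1`, the `δ`-ergodization time of the rotation `R_α` satisfies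
`N_α(δ) ≤ ⌊Ψ_α(2/δ)⌋ − 1`: for all `x, y ∈ ℝ` there are integers `k`, `m` with
`0 ≤ k ≤ ⌊Ψ_α(2/δ)⌋ − 1` and `|x + k·α − y − m| ≤ δ`. -/
theorem circle_rotation_ergodization_time (α : ℝ) (hα : Irrational α) (hα1 : |α| ≤ 1)
    (Ψ : ℝ → ℝ)
    (hΨ : ∀ Q : ℝ, Ψ Q = sSup {r : ℝ | ∃ k₁ k₂ : ℤ, ¬(k₁ = 0 ∧ k₂ = 0) ∧
      ((max |k₁| |k₂| : ℤ) : ℝ) ≤ Q ∧ r = |(k₁ : ℝ) + (k₂ : ℝ) * α|⁻¹})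
    (δ : ℝ) (hδ : 0 < δ) (hδ1 : δ < 1)
    (x y : ℝ) :
    ∃ k : ℤ, 0 ≤ k ∧ k ≤ ⌊Ψ (2 / δ)⌋ - 1 ∧
      ∃ m : ℤ, |x + (k : ℝ) * α - y - (m : ℝ)| ≤ δ := by
  have hQ : (1 : ℝ) ≤ 2 / δ := by rw [le_div_iff₀ hδ]; linarith
  obtain ⟨q, hq, hqQ, hmin⟩ := exists_forall_le_distToInt α hQ
  set β := distToInt (q * α)
  have hβ : 0 < β := distToInt_natCast_mul_pos hα hq.ne'
  have hβδ : β < δ / 2 := (lt_inv_of_forall_le_distToInt hβ hQ hmin).trans_eq (inv_div 2 δ)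
  have hΨβ : Ψ (2 / δ) = β⁻¹ :=
    (hΨ _).trans (isGreatest_inv_abs_add_mul hα hα1 hq hqQ hmin).csSup_eq
  obtain ⟨q', hq', hq'β, hq'min⟩ := exists_first_distToInt_lt α hβ
  have hqq' : q < q' := by
    by_contra! h
    exact not_le.2 hq'β (hmin q' hq' (le_trans (by exact_mod_cast h) hqQ))
  have hq'M : q' ≤ ⌊β⁻¹⌋₊ :=
    Nat.le_floor (natCast_le_inv_of_forall_le_distToInt hβ (by omega) hq'min)
  obtain ⟨k, hk, m, hm⟩ := exists_abs_mul_sub_sub_le_of_abs_sub_lt (round (q * α)) (round (q' * α))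
    hqq' hq'M hq'β (by change β + distToInt (q' * α) ≤ δ; linarith) (y - x)
  refine ⟨k, k.cast_nonneg, ?_, m, ?_⟩
  · rw [hΨβ, ← Int.natCast_floor_eq_floor (by positivity)]
    omega
  · rwa [Int.cast_natCast, show x + k * α - y - m = k * α - (y - x) - m by ring]
end

section
/- Let α ∈ ℝ, let p ∈ ℤ and q ∈ ℕ with q ≥ 1 and gcd(p,q) = 1, and let 0 < δ < 1 satisfy q ≥ 2/δ and |q·α − p| ≤ δ/2. Then for every x, y ∈ ℝ there exist an integer k with 0 ≤ k ≤ q − 1 and an integer m ∈ ℤ such that |x + k·α − y − m| ≤ δ. (That is, every orbit of length q of the rotation R_α is δ-dense in the circle.) -/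
/-! The orbit of length `q` of the rational rotation `R_{p/q}` is the set `{j/q}` of all
`q`-th points of the circle (as `p` is invertible mod `q`), hence `1/(2q)`-dense, so
`δ/4`-dense. For `k ≤ q` the `k`-th points of the two orbits are at distance
`(k/q)|qα - p| ≤ δ/2`. -/

theorem Int.exists_natCast_mul_eq_add_mul_of_isCoprime {p : ℤ} {q : ℕ} (hq : 0 < q)
    (hpq : IsCoprime p q) (n : ℤ) : ∃ k < q, ∃ m : ℤ, (k : ℤ) * p = n + q * m := by
  obtain ⟨a, b, hab⟩ := hpq
  have hq' : (0 : ℤ) < q := by exact_mod_cast hq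
  have hk : (0 : ℤ) ≤ n * a % q := Int.emod_nonneg _ hq'.ne'
  have hk' : n * a % q < q := Int.emod_lt_of_pos _ hq'
  refine ⟨(n * a % q).toNat, by omega, -(n * b) - n * a / q * p, ?_⟩
  rw [Int.toNat_of_nonneg hk, Int.emod_def]
  linear_combination n * hab

theorem exists_nat_lt_abs_add_mul_div_sub_int_le {p : ℤ} {q : ℕ} (hq : 0 < q)
    (hpq : IsCoprime p q) (t : ℝ) :
    ∃ k < q, ∃ m : ℤ, |t + k * p / q - m| ≤ 1 / (2 * q) := by
  set n := round (-(q * t))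
  have hround : |-(q * t) - n| ≤ 1 / 2 := abs_sub_round _
  obtain ⟨k, hk, m, hkp⟩ := Int.exists_natCast_mul_eq_add_mul_of_isCoprime hq hpq n
  refine ⟨k, hk, m, ?_⟩
  have hqR : (0 : ℝ) < q := by exact_mod_cast hq
  have hkpR : (k : ℝ) * p = n + q * m := by exact_mod_cast hkp
  have hsplit : t + k * p / q - m = -(-(q * t) - n) / q := by
    field_simp
    linear_combination hkpR
  rw [hsplit, abs_div, abs_neg, abs_of_pos hqR, div_le_iff₀ hqR]
  calc _ ≤ (1 : ℝ) / 2 := hround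
    _ = 1 / (2 * q) * q := by field_simp

theorem abs_nat_mul_sub_mul_div_le {k q : ℕ} (hkq : k ≤ q) (α p : ℝ) :
    |k * α - k * p / q| ≤ |q * α - p| := by
  rcases Nat.eq_zero_or_pos q with rfl | hq
  · simp_all
  have hqR : (0 : ℝ) < q := by exact_mod_cast hq
  have hkqR : (k : ℝ) / q ≤ 1 := (div_le_one hqR).2 (by exact_mod_cast hkq)
  calc |k * α - k * p / q| = (k / q) * |q * α - p| := by
        rw [← abs_of_nonneg (by positivity : (0 : ℝ) ≤ k / q), ← abs_mul]
        congr 1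
        field_simp
    _ ≤ |q * α - p| := mul_le_of_le_one_left (abs_nonneg _) hkqR

theorem rotation_orbit_dense_general (α : ℝ) (p : ℤ) (q : ℕ)
    (hpq : Int.gcd p (q : ℤ) = 1)
    (δ : ℝ) (hδ : 0 < δ)
    (hqδ : 2 / δ ≤ (q : ℝ))
    (happ : |(q : ℝ) * α - (p : ℝ)| ≤ δ / 2)
    (x y : ℝ) :
    ∃ k : ℕ, k ≤ q - 1 ∧
      ∃ m : ℤ, |x + (k : ℝ) * α - y - (m : ℝ)| ≤ δ := by
  have hqR : (0 : ℝ) < q := lt_of_lt_of_le (by positivity) hqδ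
  obtain ⟨k, hkq, m, hm⟩ := exists_nat_lt_abs_add_mul_div_sub_int_le (Nat.cast_pos.1 hqR)
    (Int.isCoprime_iff_gcd_eq_one.2 hpq) (x - y)
  have hshadow := abs_nat_mul_sub_mul_div_le hkq.le α p
  have hfine : 1 / (2 * q) ≤ δ / 4 := by
    rw [div_le_iff₀ hδ] at hqδ
    rw [div_le_iff₀ (by positivity)]
    nlinarith
  refine ⟨k, by omega, m, ?_⟩
  calc |x + k * α - y - m| = |(x - y + k * p / q - m) + (k * α - k * p / q)| := by ring_nf
    _ ≤ |x - y + k * p / q - m| + |k * α - k * p / q| := abs_add_le _ _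
    _ ≤ δ := by linarith

/-- **Approximation by a rational rotation gives `δ`-density.** If `gcd(p,q) = 1`, `q ≥ 2/δ`
and `|qα − p| ≤ δ/2` with `0 < δ < 1`, then for all `x, y ∈ ℝ` there are an integer
`0 ≤ k ≤ q − 1` and `m ∈ ℤ` with `|x + k·α − y − m| ≤ δ`; that is, every orbit of length
`q` of the rotation `R_α` is `δ`-dense in the circle. -/
theorem rotation_orbit_dense (α : ℝ) (p : ℤ) (q : ℕ) (hq : 1 ≤ q)
    (hpq : Int.gcd p (q : ℤ) = 1)
    (δ : ℝ) (hδ : 0 < δ) (hδ1 : δ < 1)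
    (hqδ : 2 / δ ≤ (q : ℝ))
    (happ : |(q : ℝ) * α - (p : ℝ)| ≤ δ / 2)
    (x y : ℝ) :
    ∃ k : ℕ, k ≤ q - 1 ∧
      ∃ m : ℤ, |x + (k : ℝ) * α - y - (m : ℝ)| ≤ δ :=
  rotation_orbit_dense_general α p q hpq δ hδ hqδ happ x y
end
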